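/- arXiv:2511.15599 — 3 statements merged into one kernel-verified Lean document; each statement's English description precedes it below -/
import Mathlib

section
/- Let β_N, β_D, β_M, β_C, γ_M, γ_C > 0 and let (m_N, m_D, m_M, m_C) : [0,∞) → ℝ⁴ be a differentiable solution of the mean system with strictly positive initial data m_J(0) > 0 for J ∈ {N, D, M, C} and with m_N(0) + m_D(0) = m⁰ > 0. Then for each J ∈ {N, D, M, C} there exist constants 0 < c_J ≤ C_J < ∞ such that c_J ≤ m_J(t) ≤ C_J for all t ≥ 0, and moreover the derivative m_J'(t) is bounded on [0,∞). -/
/-!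
Conservation of `mN + mD` and a first-exit argument keep the solution in the positive orthant, and
comparison with the linear equation `f' = K (c - f)` bounds `mD`, `mM` and `mC` from above.

For the lower bounds, with `m = mN + mD`, the weighted sum
`W = βC βM mD + m βN γC mM + m βN βM mC` has `W' = mD (m βN γC γM - βC βM (βD mM + βN mC))`:
the weights cancel every linear term except the source `mD`, so `W' ≥ 0` whenever `W` is small and
`W` stays bounded below. Hence at every time one of `mD`, `mM`, `mC` is not small. A lower bound
on `mM` passes to `mC`, and one on `mC` to `mD`, within one time unit, while `mD` decays at most
exponentially; this bounds `mD` from below uniformly, and comparison then bounds `mM`, `mC` and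
`mN` from below.
-/

open Set Real

theorem abs_neg_mul_mul_add_mul_mul_le {p q x y z w B : ℝ} (hp : 0 ≤ p) (hq : 0 ≤ q)
    (hx : x ∈ Icc 0 B) (hy : y ∈ Icc 0 B) (hz : z ∈ Icc 0 B) (hw : w ∈ Icc 0 B) :
    |-p * x * y + q * z * w| ≤ (p + q) * B ^ 2 := by
  have hxy := mul_le_mul hx.2 hy.2 hy.1 (hx.1.trans hx.2)
  have hzw := mul_le_mul hz.2 hw.2 hw.1 (hz.1.trans hz.2)
  rw [abs_le]
  constructor <;> nlinarith [mul_le_mul_of_nonneg_left hxy hp, mul_le_mul_of_nonneg_left hzw hq,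
    mul_nonneg hp (mul_nonneg hx.1 hy.1), mul_nonneg hq (mul_nonneg hz.1 hw.1)]

theorem abs_neg_mul_add_mul_le {p q x y B : ℝ} (hp : 0 ≤ p) (hq : 0 ≤ q)
    (hx : x ∈ Icc 0 B) (hy : y ∈ Icc 0 B) :
    |-p * x + q * y| ≤ (p + q) * B := by
  rw [abs_le]
  constructor <;> nlinarith [mul_le_mul_of_nonneg_left hx.2 hp, mul_le_mul_of_nonneg_left hy.2 hq,
    mul_nonneg hp hx.1, mul_nonneg hq hy.1]

section Comparison

variable {f f' : ℝ → ℝ} {K c a b : ℝ}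

theorem add_sub_mul_exp_le_of_hasDerivAt (hab : a ≤ b)
    (hf : ∀ t ∈ Icc a b, HasDerivAt f (f' t) t)
    (hf' : ∀ t ∈ Icc a b, K * (c - f t) ≤ f' t) :
    c + (f a - c) * exp (-(K * (b - a))) ≤ f b := by
  set g : ℝ → ℝ := fun t => (f t - c) * exp (K * t)
  have hg : ∀ t ∈ Icc a b, HasDerivAt g ((f' t - K * (c - f t)) * exp (K * t)) t := fun t ht =>
    (((hf t ht).sub_const c).mul ((hasDerivAt_id t).const_mul K).exp).congr_deriv (by simp; ring)
  have hmono : MonotoneOn g (Icc a b) :=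
    monotoneOn_of_hasDerivWithinAt_nonneg (convex_Icc a b)
      (fun t ht => (hg t ht).continuousAt.continuousWithinAt)
      (fun t ht => (hg t (interior_subset ht)).hasDerivWithinAt)
      (fun t ht => mul_nonneg (sub_nonneg.2 (hf' t (interior_subset ht))) (exp_pos _).le)
  have hgab := hmono (left_mem_Icc.2 hab) (right_mem_Icc.2 hab) hab
  calc c + (f a - c) * exp (-(K * (b - a))) = c + g a * exp (-(K * b)) := by
        simp only [g]; rw [mul_assoc, ← exp_add]; ring_nf
    _ ≤ c + g b * exp (-(K * b)) := by gcongr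
    _ = f b := by simp only [g]; rw [mul_assoc, ← exp_add]; simp

theorem min_le_of_hasDerivAt (hK : 0 ≤ K) (hab : a ≤ b)
    (hf : ∀ t ∈ Icc a b, HasDerivAt f (f' t) t)
    (hf' : ∀ t ∈ Icc a b, K * (c - f t) ≤ f' t) :
    min (f a) c ≤ f b := by
  have hθ : exp (-(K * (b - a))) ≤ 1 := exp_le_one_iff.2 (by nlinarith)
  have := add_sub_mul_exp_le_of_hasDerivAt hab hf hf'
  rcases le_total (f a) c with h | h
  · exact (min_le_left _ _).trans (by nlinarith)
  · exact (min_le_right _ _).trans (by nlinarith [exp_pos (-(K * (b - a)))])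

theorem le_max_of_hasDerivAt (hK : 0 ≤ K) (hab : a ≤ b)
    (hf : ∀ t ∈ Icc a b, HasDerivAt f (f' t) t)
    (hf' : ∀ t ∈ Icc a b, f' t ≤ K * (c - f t)) :
    f b ≤ max (f a) c := by
  have := min_le_of_hasDerivAt (f := -f) (f' := -f') (c := -c) hK hab
    (fun t ht => (hf t ht).neg) (fun t ht => by simp only [Pi.neg_apply]; linarith [hf' t ht])
  simpa [min_neg_neg] using this

theorem mul_exp_le_of_hasDerivAt (hab : a ≤ b)
    (hf : ∀ t ∈ Icc a b, HasDerivAt f (f' t) t)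
    (hf' : ∀ t ∈ Icc a b, -(K * f t) ≤ f' t) :
    f a * exp (-(K * (b - a))) ≤ f b := by
  simpa using add_sub_mul_exp_le_of_hasDerivAt (c := 0) hab hf (by simpa using hf')

theorem mul_exp_le_of_hasDerivAt_of_sub_le {T : ℝ} (hK : 0 ≤ K) (hab : a ≤ b) (hT : b - a ≤ T)
    (hc : 0 ≤ c) (hca : c ≤ f a)
    (hf : ∀ t ∈ Icc a b, HasDerivAt f (f' t) t)
    (hf' : ∀ t ∈ Icc a b, -(K * f t) ≤ f' t) :
    c * exp (-(K * T)) ≤ f b :=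
  calc c * exp (-(K * T)) ≤ f a * exp (-(K * (b - a))) :=
        mul_le_mul hca (exp_le_exp.2 (by nlinarith)) (exp_pos _).le (hc.trans hca)
    _ ≤ f b := mul_exp_le_of_hasDerivAt hab hf hf'

theorem mul_one_sub_exp_le_of_hasDerivAt (hab : a ≤ b) (hfa : 0 ≤ f a)
    (hf : ∀ t ∈ Icc a b, HasDerivAt f (f' t) t)
    (hf' : ∀ t ∈ Icc a b, K * (c - f t) ≤ f' t) :
    c * (1 - exp (-(K * (b - a)))) ≤ f b := by
  nlinarith [add_sub_mul_exp_le_of_hasDerivAt hab hf hf',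
    mul_nonneg hfa (exp_pos (-(K * (b - a)))).le]

theorem exists_first_zero {u : ℝ → ℝ} (hab : a ≤ b) (hu : ContinuousOn u (Icc a b))
    (ha : 0 ≤ u a) (hb : u b ≤ 0) :
    ∃ τ ∈ Icc a b, u τ = 0 ∧ ∀ s ∈ Icc a τ, 0 ≤ u s := by
  set Z := Icc a b ∩ u ⁻¹' {0}
  have hZ : Z.Nonempty := by
    obtain ⟨τ, hτ, huτ⟩ := intermediate_value_Icc' hab hu ⟨hb, ha⟩
    exact ⟨τ, hτ, huτ⟩
  have hZb : BddBelow Z := ⟨a, fun s hs => hs.1.1⟩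
  obtain ⟨hτ, huτ⟩ := (hu.preimage_isClosed_of_isClosed isClosed_Icc isClosed_singleton).csInf_mem
    hZ hZb
  refine ⟨sInf Z, hτ, huτ, fun s hs => ?_⟩
  by_contra! hus
  obtain ⟨r, hr, hur⟩ := intermediate_value_Icc' hs.1
    (hu.mono (Icc_subset_Icc_right (hs.2.trans hτ.2))) ⟨hus.le, ha⟩
  have hτr : sInf Z ≤ r := csInf_le hZb ⟨⟨hr.1, hr.2.trans (hs.2.trans hτ.2)⟩, hur⟩
  have hrs : r = s := le_antisymm hr.2 (hs.2.trans hτr)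
  exact hus.ne (hrs ▸ hur)

theorem min_le_of_hasDerivAt_nonneg_of_le {W W' : ℝ → ℝ} {w : ℝ}
    (hW : ∀ t ≥ a, HasDerivAt W (W' t) t) (hW' : ∀ t ≥ a, W t ≤ w → 0 ≤ W' t) :
    ∀ t ≥ a, min (W a) w ≤ W t := by
  intro t ht
  by_contra! hlt
  set S := Icc a t ∩ W ⁻¹' Ici (min (W a) w)
  have hSb : BddAbove S := ⟨t, fun s hs => hs.1.2⟩
  obtain ⟨hσ, hWσ⟩ := (ContinuousOn.preimage_isClosed_of_isClosed
    (fun s hs => (hW s hs.1).continuousAt.continuousWithinAt) isClosed_Icc isClosed_Ici).csSup_mem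
    ⟨a, ⟨le_rfl, ht⟩, min_le_left (W a) w⟩ hSb
  -- after the last time `sSup S` at which `W ≥ min (W a) w`, `W ≤ w`, so `W` cannot decrease
  have hbelow : ∀ s ∈ Ioo (sSup S) t, W s ≤ w := fun s hs => by
    refine le_trans ?_ (min_le_right (W a) w)
    by_contra! hWs
    exact (le_csSup hSb ⟨⟨hσ.1.trans hs.1.le, hs.2.le⟩, hWs.le⟩).not_gt hs.1
  have hmono : MonotoneOn W (Icc (sSup S) t) :=
    monotoneOn_of_hasDerivWithinAt_nonneg (convex_Icc _ _)
      (fun s hs => (hW s (hσ.1.trans hs.1)).continuousAt.continuousWithinAt)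
      (fun s hs => by
        rw [interior_Icc] at hs
        exact (hW s (hσ.1.trans hs.1.le)).hasDerivWithinAt)
      (fun s hs => by
        rw [interior_Icc] at hs
        exact hW' s (hσ.1.trans hs.1.le) (hbelow s hs))
  have := hmono (left_mem_Icc.2 hσ.2) (right_mem_Icc.2 hσ.2) hσ.2
  exact (hWσ.trans this).not_gt hlt

end Comparison

structure IsMeanSystemSolution (βN βD βM βC γM γC : ℝ) (mN mD mM mC : ℝ → ℝ) : Prop where
  hasDerivAt_N : ∀ t ≥ (0:ℝ), HasDerivAt mN (-βN * mN t * mC t + βD * mM t * mD t) t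
  hasDerivAt_D : ∀ t ≥ (0:ℝ), HasDerivAt mD (-βD * mD t * mM t + βN * mN t * mC t) t
  hasDerivAt_M : ∀ t ≥ (0:ℝ), HasDerivAt mM (-βM * mM t + γM * mD t) t
  hasDerivAt_C : ∀ t ≥ (0:ℝ), HasDerivAt mC (-βC * mC t + γC * mM t) t

namespace IsMeanSystemSolution

variable {βN βD βM βC γM γC : ℝ} {mN mD mM mC : ℝ → ℝ}

theorem mN_add_mD_eq (hs : IsMeanSystemSolution βN βD βM βC γM γC mN mD mM mC) :
    ∀ t ≥ 0, mN t + mD t = mN 0 + mD 0 := by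
  intro t ht
  have hderiv : ∀ s ≥ (0:ℝ), HasDerivAt (fun u => mN u + mD u) 0 s := fun s hs' =>
    ((hs.hasDerivAt_N s hs').add (hs.hasDerivAt_D s hs')).congr_deriv (by ring)
  exact constant_of_has_deriv_right_zero (fun s h => (hderiv s h.1).continuousAt.continuousWithinAt)
    (fun s h => (hderiv s h.1).hasDerivWithinAt) t ⟨ht, le_rfl⟩

theorem pos (hs : IsMeanSystemSolution βN βD βM βC γM γC mN mD mM mC)
    (hβN : 0 ≤ βN) (hβD : 0 ≤ βD) (hγM : 0 ≤ γM) (hγC : 0 ≤ γC)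
    (h0N : 0 < mN 0) (h0D : 0 < mD 0) (h0M : 0 < mM 0) (h0C : 0 < mC 0) :
    ∀ t ≥ 0, 0 < mN t ∧ 0 < mD t ∧ 0 < mM t ∧ 0 < mC t := by
  set u : ℝ → ℝ := fun t => min (min (mN t) (mD t)) (min (mM t) (mC t))
  suffices hu : ∀ t ≥ 0, 0 < u t by
    intro t ht
    simpa only [u, lt_min_iff, and_assoc] using hu t ht
  by_contra! ⟨t₁, ht₁, hu₁⟩
  have hcont {f f' : ℝ → ℝ} (hf : ∀ t ≥ (0:ℝ), HasDerivAt f (f' t) t) :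
      ContinuousOn f (Icc 0 t₁) := fun s h => (hf s h.1).continuousAt.continuousWithinAt
  obtain ⟨τ, hτ, huτ, hnonneg⟩ := exists_first_zero ht₁
    (((hcont hs.hasDerivAt_N).inf (hcont hs.hasDerivAt_D)).inf
      ((hcont hs.hasDerivAt_M).inf (hcont hs.hasDerivAt_C)))
    (by simp only [le_min_iff]; exact ⟨⟨h0N.le, h0D.le⟩, h0M.le, h0C.le⟩) hu₁
  have hnn : ∀ s ∈ Icc 0 τ, 0 ≤ mN s ∧ 0 ≤ mD s ∧ 0 ≤ mM s ∧ 0 ≤ mC s := fun s h => by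
    simpa only [u, le_min_iff, and_assoc] using hnonneg s h
  have hbound {f f' : ℝ → ℝ} (hf : ∀ t ≥ (0:ℝ), HasDerivAt f (f' t) t) :
      ∃ B, ∀ s ∈ Icc 0 τ, f s ≤ B := by
    obtain ⟨B, hB⟩ := isCompact_Icc.exists_bound_of_continuousOn
      ((hcont hf).mono (Icc_subset_Icc_right hτ.2))
    exact ⟨B, fun s h => (le_abs_self _).trans (hB s h)⟩
  obtain ⟨BM, hBM⟩ := hbound hs.hasDerivAt_M
  obtain ⟨BC, hBC⟩ := hbound hs.hasDerivAt_C
  have hτpos {f f' : ℝ → ℝ} {K : ℝ} (hf : ∀ t ≥ (0:ℝ), HasDerivAt f (f' t) t) (h0 : 0 < f 0)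
      (hf' : ∀ s ∈ Icc 0 τ, -(K * f s) ≤ f' s) : 0 < f τ :=
    (mul_pos h0 (exp_pos _)).trans_le (mul_exp_le_of_hasDerivAt hτ.1 (fun s h => hf s h.1) hf')
  have hNτ : 0 < mN τ := hτpos hs.hasDerivAt_N h0N (K := βN * BC) fun s h => by
    obtain ⟨hN, hD, hM, -⟩ := hnn s h
    nlinarith [mul_le_mul_of_nonneg_left (hBC s h) (mul_nonneg hβN hN),
      mul_nonneg (mul_nonneg hβD hM) hD]
  have hDτ : 0 < mD τ := hτpos hs.hasDerivAt_D h0D (K := βD * BM) fun s h => by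
    obtain ⟨hN, hD, -, hC⟩ := hnn s h
    nlinarith [mul_le_mul_of_nonneg_left (hBM s h) (mul_nonneg hβD hD),
      mul_nonneg (mul_nonneg hβN hN) hC]
  have hMτ : 0 < mM τ := hτpos hs.hasDerivAt_M h0M (K := βM) fun s h => by
    nlinarith [mul_nonneg hγM (hnn s h).2.1]
  have hCτ : 0 < mC τ := hτpos hs.hasDerivAt_C h0C (K := βC) fun s h => by
    nlinarith [mul_nonneg hγC (hnn s h).2.2.1]
  have : 0 < u τ := lt_min (lt_min hNτ hDτ) (lt_min hMτ hCτ)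
  exact this.ne' huτ

theorem exists_upper_bound (hs : IsMeanSystemSolution βN βD βM βC γM γC mN mD mM mC)
    (hβM : 0 < βM) (hβC : 0 < βC) (hγM : 0 ≤ γM) (hγC : 0 ≤ γC)
    (hpos : ∀ t ≥ 0, 0 < mN t ∧ 0 < mD t ∧ 0 < mM t ∧ 0 < mC t) :
    ∃ B, ∀ t ≥ 0, mN t ≤ B ∧ mD t ≤ B ∧ mM t ≤ B ∧ mC t ≤ B := by
  set m := mN 0 + mD 0
  have hN : ∀ t ≥ 0, mN t ≤ m := fun t ht => by
    linarith [hs.mN_add_mD_eq t ht, (hpos t ht).2.1]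
  have hD : ∀ t ≥ 0, mD t ≤ m := fun t ht => by
    linarith [hs.mN_add_mD_eq t ht, (hpos t ht).1]
  set BM := max (mM 0) (γM * m / βM)
  have hM : ∀ t ≥ 0, mM t ≤ BM := fun t ht =>
    le_max_of_hasDerivAt hβM.le ht (fun s h => hs.hasDerivAt_M s h.1) fun s h => by
      rw [mul_sub, mul_div_cancel₀ _ hβM.ne']
      nlinarith [hD s h.1]
  set BC := max (mC 0) (γC * BM / βC)
  have hC : ∀ t ≥ 0, mC t ≤ BC := fun t ht =>
    le_max_of_hasDerivAt hβC.le ht (fun s h => hs.hasDerivAt_C s h.1) fun s h => by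
      rw [mul_sub, mul_div_cancel₀ _ hβC.ne']
      nlinarith [hM s h.1]
  refine ⟨max m (max BM BC), fun t ht => ⟨(hN t ht).trans (le_max_left _ _),
    (hD t ht).trans (le_max_left _ _), (hM t ht).trans ((le_max_left _ _).trans (le_max_right _ _)),
    (hC t ht).trans ((le_max_right _ _).trans (le_max_right _ _))⟩⟩

theorem exists_pos_le_weightedSum (hs : IsMeanSystemSolution βN βD βM βC γM γC mN mD mM mC)
    (hβN : 0 < βN) (hβD : 0 ≤ βD) (hβM : 0 < βM) (hβC : 0 < βC) (hγM : 0 < γM) (hγC : 0 < γC)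
    {m : ℝ} (hm : ∀ t ≥ 0, mN t + mD t = m)
    (hpos : ∀ t ≥ 0, 0 < mN t ∧ 0 < mD t ∧ 0 < mM t ∧ 0 < mC t) :
    ∃ w > 0, ∀ t ≥ 0, w ≤ βC * βM * mD t + m * βN * γC * mM t + m * βN * βM * mC t := by
  obtain ⟨h0N, h0D, h0M, h0C⟩ := hpos 0 le_rfl
  have hm0 : 0 < m := by linarith [hm 0 le_rfl]
  set W : ℝ → ℝ := fun t => βC * βM * mD t + m * βN * γC * mM t + m * βN * βM * mC t
  have hW : ∀ t ≥ 0, HasDerivAt W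
      (mD t * (m * βN * γC * γM - βC * βM * (βD * mM t + βN * mC t))) t := fun t ht =>
    ((((hs.hasDerivAt_D t ht).const_mul (βC * βM)).add
      ((hs.hasDerivAt_M t ht).const_mul (m * βN * γC))).add
      ((hs.hasDerivAt_C t ht).const_mul (m * βN * βM))).congr_deriv (by
        rw [show mN t = m - mD t by linarith [hm t ht]]
        ring)
  set L := βC * (βM * βD + βN * γC)
  set w := (m * βN * γC) ^ 2 * γM / L
  have hL : 0 < L := by positivity
  have hW' : ∀ t ≥ 0, W t ≤ w →
      0 ≤ mD t * (m * βN * γC * γM - βC * βM * (βD * mM t + βN * mC t)) := by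
    intro t ht hWt
    obtain ⟨-, hD, hM, hC⟩ := hpos t ht
    refine mul_nonneg hD.le
      (sub_nonneg.2 (le_of_mul_le_mul_left ?_ (by positivity : 0 < m * βN * γC)))
    have hWM : m * βN * γC * mM t ≤ W t := by
      nlinarith [mul_pos (mul_pos hβC hβM) hD, mul_pos (mul_pos (mul_pos hm0 hβN) hβM) hC]
    have hWC : m * βN * βM * mC t ≤ W t := by
      nlinarith [mul_pos (mul_pos hβC hβM) hD, mul_pos (mul_pos (mul_pos hm0 hβN) hγC) hM]
    calc m * βN * γC * (βC * βM * (βD * mM t + βN * mC t))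
        = βC * βM * βD * (m * βN * γC * mM t) + βC * βN * γC * (m * βN * βM * mC t) := by ring
      _ ≤ βC * βM * βD * W t + βC * βN * γC * W t := by gcongr
      _ = L * W t := by ring
      _ ≤ L * w := by gcongr
      _ = m * βN * γC * (m * βN * γC * γM) := by simp only [w]; field_simp
  exact ⟨min (W 0) w, lt_min (by positivity) (by positivity),
    min_le_of_hasDerivAt_nonneg_of_le hW hW'⟩

theorem exists_pos_forall_le_or (hs : IsMeanSystemSolution βN βD βM βC γM γC mN mD mM mC)
    (hβN : 0 < βN) (hβD : 0 ≤ βD) (hβM : 0 < βM) (hβC : 0 < βC) (hγM : 0 < γM) (hγC : 0 < γC)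
    {m : ℝ} (hm : ∀ t ≥ 0, mN t + mD t = m)
    (hpos : ∀ t ≥ 0, 0 < mN t ∧ 0 < mD t ∧ 0 < mM t ∧ 0 < mC t) :
    ∃ ε > 0, ∀ t ≥ 0, ε ≤ mD t ∨ ε ≤ mM t ∨ ε ≤ mC t := by
  obtain ⟨w, hw, hW⟩ := hs.exists_pos_le_weightedSum hβN hβD hβM hβC hγM hγC hm hpos
  have hm0 : 0 < m := by linarith [hm 0 le_rfl, (hpos 0 le_rfl).1, (hpos 0 le_rfl).2.1]
  set S := βC * βM + m * βN * γC + m * βN * βM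
  have hS : 0 < S := by positivity
  refine ⟨w / S, by positivity, fun t ht => ?_⟩
  by_contra! ⟨hD, hM, hC⟩
  have : S * (w / S) = w := mul_div_cancel₀ _ hS.ne'
  nlinarith [hW t ht, mul_lt_mul_of_pos_left hD (by positivity : 0 < βC * βM),
    mul_lt_mul_of_pos_left hM (by positivity : 0 < m * βN * γC),
    mul_lt_mul_of_pos_left hC (by positivity : 0 < m * βN * βM)]

theorem exists_pos_le_mC_add_one (hs : IsMeanSystemSolution βN βD βM βC γM γC mN mD mM mC)
    (hβM : 0 ≤ βM) (hβC : 0 < βC) (hγM : 0 ≤ γM) (hγC : 0 < γC)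
    (hpos : ∀ t ≥ 0, 0 < mN t ∧ 0 < mD t ∧ 0 < mM t ∧ 0 < mC t) {c : ℝ} (hc : 0 < c) :
    ∃ δ > 0, ∀ t ≥ 0, c ≤ mM t → δ ≤ mC (t + 1) := by
  set c' := c * exp (-βM)
  refine ⟨γC * c' / βC * (1 - exp (-βC)), ?_, fun t ht hct => ?_⟩
  · have : exp (-βC) < 1 := exp_lt_one_iff.2 (by linarith)
    have : 0 < c' := by positivity
    have : 0 < 1 - exp (-βC) := by linarith
    positivity
  have hM : ∀ s ∈ Icc t (t + 1), c' ≤ mM s := fun s h => by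
    simpa using mul_exp_le_of_hasDerivAt_of_sub_le (T := 1) hβM h.1 (by linarith [h.2]) hc.le hct
      (fun r hr => hs.hasDerivAt_M r (ht.trans hr.1))
      (fun r hr => by nlinarith [mul_nonneg hγM (hpos r (ht.trans hr.1)).2.1.le])
  have := mul_one_sub_exp_le_of_hasDerivAt (c := γC * c' / βC) (by linarith : t ≤ t + 1)
    (hpos t ht).2.2.2.le (fun r hr => hs.hasDerivAt_C r (ht.trans hr.1)) fun r hr => by
      rw [mul_sub, mul_div_cancel₀ _ hβC.ne']
      nlinarith [hM r hr]
  rwa [add_sub_cancel_left, mul_one] at this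

theorem exists_pos_le_mD_add_one (hs : IsMeanSystemSolution βN βD βM βC γM γC mN mD mM mC)
    (hβN : 0 < βN) (hβD : 0 ≤ βD) (hβC : 0 ≤ βC) (hγC : 0 ≤ γC)
    {m B : ℝ} (hm : ∀ t ≥ 0, mN t + mD t = m) (hB : ∀ t ≥ 0, mM t ≤ B)
    (hpos : ∀ t ≥ 0, 0 < mN t ∧ 0 < mD t ∧ 0 < mM t ∧ 0 < mC t) {c : ℝ} (hc : 0 < c) :
    ∃ δ > 0, ∀ t ≥ 0, c ≤ mC t → δ ≤ mD (t + 1) := by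
  obtain ⟨h0N, h0D, h0M, -⟩ := hpos 0 le_rfl
  have hm0 : 0 < m := by linarith [hm 0 le_rfl]
  have hB0 : 0 < B := h0M.trans_le (hB 0 le_rfl)
  set c' := c * exp (-βC)
  have hc' : 0 < c' := by positivity
  set K := βD * B + βN * c'
  have hK : 0 < K := by positivity
  refine ⟨βN * m * c' / K * (1 - exp (-K)), ?_, fun t ht hct => ?_⟩
  · have : exp (-K) < 1 := exp_lt_one_iff.2 (by linarith)
    have : 0 < 1 - exp (-K) := by linarith
    positivity
  have hC : ∀ s ∈ Icc t (t + 1), c' ≤ mC s := fun s h => by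
    simpa using mul_exp_le_of_hasDerivAt_of_sub_le (T := 1) hβC h.1 (by linarith [h.2]) hc.le hct
      (fun r hr => hs.hasDerivAt_C r (ht.trans hr.1))
      (fun r hr => by nlinarith [mul_nonneg hγC (hpos r (ht.trans hr.1)).2.2.1.le])
  have := mul_one_sub_exp_le_of_hasDerivAt (c := βN * m * c' / K) (by linarith : t ≤ t + 1)
    (hpos t ht).2.1.le (fun r hr => hs.hasDerivAt_D r (ht.trans hr.1)) fun r hr => by
      have hr0 : 0 ≤ r := ht.trans hr.1
      obtain ⟨hN, hD, -, -⟩ := hpos r hr0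
      rw [mul_sub, mul_div_cancel₀ _ hK.ne', show m = mN r + mD r from (hm r hr0).symm]
      nlinarith [mul_nonneg (mul_nonneg hβD hD.le) (sub_nonneg.2 (hB r hr0)),
        mul_nonneg (mul_nonneg hβN.le hN.le) (sub_nonneg.2 (hC r hr))]
  rwa [add_sub_cancel_left, mul_one] at this

theorem exists_pos_forall_exists_le_mD (hs : IsMeanSystemSolution βN βD βM βC γM γC mN mD mM mC)
    (hβN : 0 < βN) (hβD : 0 ≤ βD) (hβM : 0 < βM) (hβC : 0 < βC) (hγM : 0 < γM) (hγC : 0 < γC)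
    {m B : ℝ} (hm : ∀ t ≥ 0, mN t + mD t = m) (hB : ∀ t ≥ 0, mM t ≤ B)
    (hpos : ∀ t ≥ 0, 0 < mN t ∧ 0 < mD t ∧ 0 < mM t ∧ 0 < mC t) :
    ∃ η > 0, ∀ t ≥ 0, ∃ u ∈ Icc t (t + 2), η ≤ mD u := by
  obtain ⟨ε, hε, hor⟩ := hs.exists_pos_forall_le_or hβN hβD hβM hβC hγM hγC hm hpos
  obtain ⟨δ₁, hδ₁, hMC⟩ := hs.exists_pos_le_mC_add_one hβM.le hβC hγM.le hγC hpos hε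
  obtain ⟨δ₂, hδ₂, hCD⟩ :=
    hs.exists_pos_le_mD_add_one hβN hβD hβC.le hγC.le hm hB hpos (lt_min hε hδ₁)
  refine ⟨min ε δ₂, lt_min hε hδ₂, fun t ht => ?_⟩
  rcases hor t ht with hD | hM | hC
  · exact ⟨t, ⟨le_rfl, by linarith⟩, (min_le_left _ _).trans hD⟩
  · have hC₁ : min ε δ₁ ≤ mC (t + 1) := (min_le_right _ _).trans (hMC t ht hM)
    refine ⟨t + 1 + 1, ⟨by linarith, by linarith⟩, (min_le_right _ _).trans ?_⟩
    exact hCD (t + 1) (by linarith) hC₁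
  · exact ⟨t + 1, ⟨by linarith, by linarith⟩,
      (min_le_right _ _).trans (hCD t ht ((min_le_left _ _).trans hC))⟩

theorem exists_pos_le_mD (hs : IsMeanSystemSolution βN βD βM βC γM γC mN mD mM mC)
    (hβN : 0 < βN) (hβD : 0 ≤ βD) (hβM : 0 < βM) (hβC : 0 < βC) (hγM : 0 < γM) (hγC : 0 < γC)
    {m B : ℝ} (hm : ∀ t ≥ 0, mN t + mD t = m) (hB : ∀ t ≥ 0, mM t ≤ B)
    (hpos : ∀ t ≥ 0, 0 < mN t ∧ 0 < mD t ∧ 0 < mM t ∧ 0 < mC t) :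
    ∃ δ > 0, ∀ t ≥ 0, δ ≤ mD t := by
  obtain ⟨η, hη, hrec⟩ :=
    hs.exists_pos_forall_exists_le_mD hβN hβD hβM hβC hγM hγC hm hB hpos
  obtain ⟨-, h0D, h0M, -⟩ := hpos 0 le_rfl
  have hB0 : 0 ≤ B := h0M.le.trans (hB 0 le_rfl)
  refine ⟨min η (mD 0) * exp (-(βD * B * 2)), by positivity, fun t ht => ?_⟩
  obtain ⟨a, ha, hηa, hat, hta⟩ : ∃ a ≥ 0, min η (mD 0) ≤ mD a ∧ a ≤ t ∧ t - a ≤ 2 := by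
    rcases le_total t 2 with h | h
    · exact ⟨0, le_rfl, min_le_right _ _, ht, by linarith⟩
    · obtain ⟨u, hu, hηu⟩ := hrec (t - 2) (by linarith)
      exact ⟨u, by linarith [hu.1], (min_le_left _ _).trans hηu, by linarith [hu.2],
        by linarith [hu.1]⟩
  refine mul_exp_le_of_hasDerivAt_of_sub_le (mul_nonneg hβD hB0) hat hta (by positivity) hηa
    (fun s h => hs.hasDerivAt_D s (ha.trans h.1)) fun s h => ?_
  obtain ⟨hN, hD, -, hC⟩ := hpos s (ha.trans h.1)
  nlinarith [mul_nonneg (mul_nonneg hβD hD.le) (sub_nonneg.2 (hB s (ha.trans h.1))),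
    mul_nonneg (mul_nonneg hβN.le hN.le) hC.le]

theorem exists_pos_lower_bound (hs : IsMeanSystemSolution βN βD βM βC γM γC mN mD mM mC)
    (hβN : 0 < βN) (hβD : 0 < βD) (hβM : 0 < βM) (hβC : 0 < βC) (hγM : 0 < γM) (hγC : 0 < γC)
    {B : ℝ} (hB : ∀ t ≥ 0, mN t ≤ B ∧ mD t ≤ B ∧ mM t ≤ B ∧ mC t ≤ B)
    (hpos : ∀ t ≥ 0, 0 < mN t ∧ 0 < mD t ∧ 0 < mM t ∧ 0 < mC t) :
    ∃ c > 0, ∀ t ≥ 0, c ≤ mN t ∧ c ≤ mD t ∧ c ≤ mM t ∧ c ≤ mC t := by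
  obtain ⟨h0N, h0D, h0M, h0C⟩ := hpos 0 le_rfl
  have hB0 : 0 < B := h0M.trans_le (hB 0 le_rfl).2.2.1
  obtain ⟨cD, hcD, hD⟩ := hs.exists_pos_le_mD hβN hβD.le hβM hβC hγM hγC hs.mN_add_mD_eq
    (fun t ht => (hB t ht).2.2.1) hpos
  set cM := min (mM 0) (γM * cD / βM)
  have hM : ∀ t ≥ 0, cM ≤ mM t := fun t ht =>
    min_le_of_hasDerivAt hβM.le ht (fun s h => hs.hasDerivAt_M s h.1) fun s h => by
      rw [mul_sub, mul_div_cancel₀ _ hβM.ne']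
      nlinarith [hD s h.1]
  set cC := min (mC 0) (γC * cM / βC)
  have hC : ∀ t ≥ 0, cC ≤ mC t := fun t ht =>
    min_le_of_hasDerivAt hβC.le ht (fun s h => hs.hasDerivAt_C s h.1) fun s h => by
      rw [mul_sub, mul_div_cancel₀ _ hβC.ne']
      nlinarith [hM s h.1]
  have hcM : 0 < cM := lt_min h0M (by positivity)
  set cN := min (mN 0) (βD * cM * cD / (βN * B))
  have hN : ∀ t ≥ 0, cN ≤ mN t := fun t ht =>
    min_le_of_hasDerivAt (K := βN * B) (by positivity) ht (fun s h => hs.hasDerivAt_N s h.1)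
      fun s h => by
      obtain ⟨hNs, -, -, -⟩ := hpos s h.1
      rw [mul_sub, mul_div_cancel₀ _ (by positivity)]
      nlinarith [mul_nonneg (mul_nonneg hβN.le hNs.le) (sub_nonneg.2 (hB s h.1).2.2.2),
        mul_le_mul (hM s h.1) (hD s h.1) hcD.le (hpos s h.1).2.2.1.le]
  refine ⟨min (min cN cD) (min cM cC), lt_min (lt_min (lt_min h0N (by positivity)) hcD)
    (lt_min hcM (lt_min h0C (by positivity))), fun t ht => ⟨?_, ?_, ?_, ?_⟩⟩
  · exact (min_le_left _ _).trans ((min_le_left _ _).trans (hN t ht))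
  · exact (min_le_left _ _).trans ((min_le_right _ _).trans (hD t ht))
  · exact (min_le_right _ _).trans ((min_le_left _ _).trans (hM t ht))
  · exact (min_le_right _ _).trans ((min_le_right _ _).trans (hC t ht))

theorem exists_uniform_bounds (hs : IsMeanSystemSolution βN βD βM βC γM γC mN mD mM mC)
    (hβN : 0 < βN) (hβD : 0 < βD) (hβM : 0 < βM) (hβC : 0 < βC) (hγM : 0 < γM) (hγC : 0 < γC)
    (h0N : 0 < mN 0) (h0D : 0 < mD 0) (h0M : 0 < mM 0) (h0C : 0 < mC 0) :
    ∃ c B, 0 < c ∧ ∀ t ≥ 0, mN t ∈ Icc c B ∧ mD t ∈ Icc c B ∧ mM t ∈ Icc c B ∧ mC t ∈ Icc c B := by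
  have hpos := hs.pos hβN.le hβD.le hγM.le hγC.le h0N h0D h0M h0C
  obtain ⟨B, hB⟩ := hs.exists_upper_bound hβM hβC hγM.le hγC.le hpos
  obtain ⟨c, hc, hlow⟩ := hs.exists_pos_lower_bound hβN hβD hβM hβC hγM hγC hB hpos
  exact ⟨c, B, hc, fun t ht => ⟨⟨(hlow t ht).1, (hB t ht).1⟩, ⟨(hlow t ht).2.1, (hB t ht).2.1⟩,
    ⟨(hlow t ht).2.2.1, (hB t ht).2.2.1⟩, ⟨(hlow t ht).2.2.2, (hB t ht).2.2.2⟩⟩⟩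

theorem abs_deriv_le (hs : IsMeanSystemSolution βN βD βM βC γM γC mN mD mM mC)
    (hβN : 0 ≤ βN) (hβD : 0 ≤ βD) (hβM : 0 ≤ βM) (hβC : 0 ≤ βC) (hγM : 0 ≤ γM) (hγC : 0 ≤ γC)
    {c B : ℝ} (hc : 0 ≤ c)
    (hbox : ∀ t ≥ 0, mN t ∈ Icc c B ∧ mD t ∈ Icc c B ∧ mM t ∈ Icc c B ∧ mC t ∈ Icc c B) :
    ∀ t ≥ 0, |deriv mN t| ≤ (βN + βD) * B ^ 2 ∧ |deriv mD t| ≤ (βD + βN) * B ^ 2 ∧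
      |deriv mM t| ≤ (βM + γM) * B ∧ |deriv mC t| ≤ (βC + γC) * B := by
  intro t ht
  have h0 : Icc c B ⊆ Icc 0 B := Icc_subset_Icc_left hc
  obtain ⟨hN, hD, hM, hC⟩ := hbox t ht
  rw [(hs.hasDerivAt_N t ht).deriv, (hs.hasDerivAt_D t ht).deriv, (hs.hasDerivAt_M t ht).deriv,
    (hs.hasDerivAt_C t ht).deriv]
  exact ⟨abs_neg_mul_mul_add_mul_mul_le hβN hβD (h0 hN) (h0 hC) (h0 hM) (h0 hD),
    abs_neg_mul_mul_add_mul_mul_le hβD hβN (h0 hD) (h0 hM) (h0 hN) (h0 hC),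
    abs_neg_mul_add_mul_le hβM hγM (h0 hM) (h0 hD), abs_neg_mul_add_mul_le hβC hγC (h0 hC) (h0 hM)⟩

end IsMeanSystemSolution

theorem meanSystem_uniform_bounds_general
    (βN βD βM βC γM γC : ℝ)
    (hβN : 0 < βN) (hβD : 0 < βD) (hβM : 0 < βM) (hβC : 0 < βC)
    (hγM : 0 < γM) (hγC : 0 < γC)
    (mN mD mM mC : ℝ → ℝ)
    (hN : ∀ t ≥ (0:ℝ), HasDerivAt mN (-βN * mN t * mC t + βD * mM t * mD t) t)
    (hD : ∀ t ≥ (0:ℝ), HasDerivAt mD (-βD * mD t * mM t + βN * mN t * mC t) t)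
    (hM : ∀ t ≥ (0:ℝ), HasDerivAt mM (-βM * mM t + γM * mD t) t)
    (hC : ∀ t ≥ (0:ℝ), HasDerivAt mC (-βC * mC t + γC * mM t) t)
    (h0N : 0 < mN 0) (h0D : 0 < mD 0) (h0M : 0 < mM 0) (h0C : 0 < mC 0) :
    ((∃ c C : ℝ, 0 < c ∧ c ≤ C ∧ ∀ t ≥ (0:ℝ), c ≤ mN t ∧ mN t ≤ C) ∧
      ∃ K : ℝ, ∀ t ≥ (0:ℝ), |deriv mN t| ≤ K) ∧
    ((∃ c C : ℝ, 0 < c ∧ c ≤ C ∧ ∀ t ≥ (0:ℝ), c ≤ mD t ∧ mD t ≤ C) ∧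
      ∃ K : ℝ, ∀ t ≥ (0:ℝ), |deriv mD t| ≤ K) ∧
    ((∃ c C : ℝ, 0 < c ∧ c ≤ C ∧ ∀ t ≥ (0:ℝ), c ≤ mM t ∧ mM t ≤ C) ∧
      ∃ K : ℝ, ∀ t ≥ (0:ℝ), |deriv mM t| ≤ K) ∧
    ((∃ c C : ℝ, 0 < c ∧ c ≤ C ∧ ∀ t ≥ (0:ℝ), c ≤ mC t ∧ mC t ≤ C) ∧
      ∃ K : ℝ, ∀ t ≥ (0:ℝ), |deriv mC t| ≤ K) := by
  have hs : IsMeanSystemSolution βN βD βM βC γM γC mN mD mM mC := ⟨hN, hD, hM, hC⟩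
  obtain ⟨c, B, hc, hbox⟩ := hs.exists_uniform_bounds hβN hβD hβM hβC hγM hγC h0N h0D h0M h0C
  have hcB : c ≤ B := (hbox 0 le_rfl).1.1.trans (hbox 0 le_rfl).1.2
  have hderiv := hs.abs_deriv_le hβN.le hβD.le hβM.le hβC.le hγM.le hγC.le hc.le hbox
  exact ⟨⟨⟨c, B, hc, hcB, fun t ht => (hbox t ht).1⟩, _, fun t ht => (hderiv t ht).1⟩,
    ⟨⟨c, B, hc, hcB, fun t ht => (hbox t ht).2.1⟩, _, fun t ht => (hderiv t ht).2.1⟩,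
    ⟨⟨c, B, hc, hcB, fun t ht => (hbox t ht).2.2.1⟩, _, fun t ht => (hderiv t ht).2.2.1⟩,
    ⟨⟨c, B, hc, hcB, fun t ht => (hbox t ht).2.2.2⟩, _, fun t ht => (hderiv t ht).2.2.2⟩⟩

/-- For a differentiable solution of the mean system with strictly
positive initial data and `m_N(0) + m_D(0) = m⁰ > 0`, each component is bounded above
and below by positive constants uniformly in `t ≥ 0`, and each derivative is bounded
on `[0,∞)`. -/
theorem meanSystem_uniform_bounds
    (βN βD βM βC γM γC m0 : ℝ)
    (hβN : 0 < βN) (hβD : 0 < βD) (hβM : 0 < βM) (hβC : 0 < βC)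
    (hγM : 0 < γM) (hγC : 0 < γC) (hm0 : 0 < m0)
    (mN mD mM mC : ℝ → ℝ)
    (hN : ∀ t ≥ (0:ℝ), HasDerivAt mN (-βN * mN t * mC t + βD * mM t * mD t) t)
    (hD : ∀ t ≥ (0:ℝ), HasDerivAt mD (-βD * mD t * mM t + βN * mN t * mC t) t)
    (hM : ∀ t ≥ (0:ℝ), HasDerivAt mM (-βM * mM t + γM * mD t) t)
    (hC : ∀ t ≥ (0:ℝ), HasDerivAt mC (-βC * mC t + γC * mM t) t)
    (h0N : 0 < mN 0) (h0D : 0 < mD 0) (h0M : 0 < mM 0) (h0C : 0 < mC 0)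
    (hsum : mN 0 + mD 0 = m0) :
    ((∃ c C : ℝ, 0 < c ∧ c ≤ C ∧ ∀ t ≥ (0:ℝ), c ≤ mN t ∧ mN t ≤ C) ∧
      ∃ K : ℝ, ∀ t ≥ (0:ℝ), |deriv mN t| ≤ K) ∧
    ((∃ c C : ℝ, 0 < c ∧ c ≤ C ∧ ∀ t ≥ (0:ℝ), c ≤ mD t ∧ mD t ≤ C) ∧
      ∃ K : ℝ, ∀ t ≥ (0:ℝ), |deriv mD t| ≤ K) ∧
    ((∃ c C : ℝ, 0 < c ∧ c ≤ C ∧ ∀ t ≥ (0:ℝ), c ≤ mM t ∧ mM t ≤ C) ∧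
      ∃ K : ℝ, ∀ t ≥ (0:ℝ), |deriv mM t| ≤ K) ∧
    ((∃ c C : ℝ, 0 < c ∧ c ≤ C ∧ ∀ t ≥ (0:ℝ), c ≤ mC t ∧ mC t ≤ C) ∧
      ∃ K : ℝ, ∀ t ≥ (0:ℝ), |deriv mC t| ≤ K) :=
  meanSystem_uniform_bounds_general βN βD βM βC γM γC hβN hβD hβM hβC hγM hγC mN mD mM mC hN hD hM
    hC h0N h0D h0M h0C
end

section
/- Fix ν > 0 and let ω : [0,∞) → (0,∞) be differentiable. Let f(x,t) = f_{ν,ω(t)}(x) be the inverse Gamma density with shape ν and time-dependent scale ω(t). Then for every t, the time derivative ∂f/∂t(·,t) is integrable on (0,∞) and ∫₀^∞ |∂f/∂t(x,t)| dx ≤ |ω'(t)| · 2ν/ω(t). -/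
open MeasureTheory

/-- The inverse Gamma probability density with shape `ν` and scale `ω`:
`f_{ν,ω}(x) = ω^ν / Γ(ν) · x^{-(ν+1)} · e^{-ω/x}` for `x > 0`. -/
noncomputable def invGammaPdf (ν ω x : ℝ) : ℝ :=
  ω ^ ν / Real.Gamma ν * x ^ (-(ν + 1)) * Real.exp (-ω / x)

/-!
Differentiating in the scale, `∂_ω f_{ν,ω} = f_{ν,ω} · (ν/ω - 1/x)`, and
`f_{ν,ω}(x) / x = (ν/ω) f_{ν+1,ω}(x)`, so `∂_ω f_{ν,ω} = (ν/ω) (f_{ν,ω} - f_{ν+1,ω})` is `ν/ω`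
times a difference of two probability densities. Its `L¹` norm is therefore at most `2ν/ω`,
and the chain rule contributes the factor `|ω'(t)|`.
-/

open Set Real

section InverseGammaKernel

variable {p a : ℝ}

/-- The substitution `x = y⁻¹` turning the inverse Gamma kernel into the Gamma kernel, in the
shape expected by `integral_comp_rpow_Ioi` with exponent `-1`. -/
lemma rpow_neg_mul_exp_neg_div_eq_comp_inv (p a : ℝ) {x : ℝ} (hx : 0 < x) :
    (|(-1 : ℝ)| * x ^ ((-1 : ℝ) - 1)) •
        (fun y : ℝ => y ^ (p - 1) * exp (-(a * y))) (x ^ (-1 : ℝ)) =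
      x ^ (-(p + 1)) * exp (-a / x) := by
  simp only [smul_eq_mul, abs_neg, abs_one, one_mul, rpow_neg_one, inv_rpow hx.le,
    ← rpow_neg hx.le]
  rw [← mul_assoc, ← rpow_add hx, div_eq_mul_inv, neg_mul]
  congr 2
  ring

lemma integrableOn_rpow_neg_mul_exp_neg_div (hp : 0 < p) (ha : 0 < a) :
    IntegrableOn (fun x : ℝ => x ^ (-(p + 1)) * exp (-a / x)) (Ioi 0) := by
  have hGamma : IntegrableOn (fun y : ℝ => y ^ (p - 1) * exp (-(a * y))) (Ioi 0) := by
    simpa only [rpow_one, neg_mul] using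
      integrableOn_rpow_mul_exp_neg_mul_rpow (s := p - 1) (by linarith) zero_lt_one ha
  exact ((integrableOn_Ioi_comp_rpow_iff _ (by norm_num)).mpr hGamma).congr_fun
    (fun x hx => rpow_neg_mul_exp_neg_div_eq_comp_inv p a hx) measurableSet_Ioi

lemma integral_rpow_neg_mul_exp_neg_div (hp : 0 < p) (ha : 0 < a) :
    ∫ x in Ioi 0, x ^ (-(p + 1)) * exp (-a / x) = (1 / a) ^ p * Gamma p := by
  rw [← integral_rpow_mul_exp_neg_mul_Ioi hp ha,
    ← integral_comp_rpow_Ioi (fun y : ℝ => y ^ (p - 1) * exp (-(a * y)))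
      (by norm_num : (-1 : ℝ) ≠ 0)]
  exact setIntegral_congr_fun measurableSet_Ioi
    (fun x hx => (rpow_neg_mul_exp_neg_div_eq_comp_inv p a hx).symm)

end InverseGammaKernel

section InvGammaPdf

variable {ν ω x : ℝ}

lemma invGammaPdf_eq_const_mul (ν ω x : ℝ) :
    invGammaPdf ν ω x = ω ^ ν / Gamma ν * (x ^ (-(ν + 1)) * exp (-ω / x)) :=
  mul_assoc _ _ _

lemma invGammaPdf_nonneg (hν : 0 < ν) (hω : 0 < ω) (hx : 0 < x) : 0 ≤ invGammaPdf ν ω x := by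
  have := Gamma_pos_of_pos hν
  unfold invGammaPdf
  positivity

lemma integrableOn_invGammaPdf (hν : 0 < ν) (hω : 0 < ω) :
    IntegrableOn (invGammaPdf ν ω) (Ioi 0) := by
  rw [funext (invGammaPdf_eq_const_mul ν ω)]
  exact (integrableOn_rpow_neg_mul_exp_neg_div hν hω).const_mul _

lemma integral_invGammaPdf (hν : 0 < ν) (hω : 0 < ω) :
    ∫ x in Ioi 0, invGammaPdf ν ω x = 1 := by
  simp only [invGammaPdf_eq_const_mul]
  rw [integral_const_mul, integral_rpow_neg_mul_exp_neg_div hν hω, one_div,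
    inv_rpow hω.le]
  have := (rpow_pos_of_pos hω ν).ne'
  have := (Gamma_pos_of_pos hν).ne'
  field_simp

lemma invGammaPdf_div (hν : ν ≠ 0) (hω : ω ≠ 0) (hx : x ≠ 0) :
    invGammaPdf ν ω x / x = ν / ω * invGammaPdf (ν + 1) ω x := by
  have hexp : -(ν + 1 + 1) = -(ν + 1) - 1 := by ring
  unfold invGammaPdf
  rw [hexp, rpow_sub_one hx, rpow_add_one hω, Gamma_add_one hν]
  field_simp

lemma hasDerivAt_invGammaPdf_scale (hν : ν ≠ 0) (hω : ω ≠ 0) (hx : x ≠ 0) :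
    HasDerivAt (fun ω => invGammaPdf ν ω x)
      (ν / ω * (invGammaPdf ν ω x - invGammaPdf (ν + 1) ω x)) ω := by
  have hpow := (hasDerivAt_rpow_const (p := ν) (Or.inl hω)).div_const (Gamma ν)
  have hexp := ((hasDerivAt_neg ω).div_const x).exp
  refine ((hpow.mul_const (x ^ (-(ν + 1)))).mul hexp).congr_deriv ?_
  rw [mul_sub, ← invGammaPdf_div hν hω hx, rpow_sub_one hω]
  unfold invGammaPdf
  field_simp
  ring

end InvGammaPdf

/-- For a differentiable positive scale function `ω(t)`, the time
derivative of `f(x,t) = f_{ν,ω(t)}(x)` is integrable in `x` on `(0,∞)` with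
`∫₀^∞ |∂f/∂t(x,t)| dx ≤ |ω'(t)| · 2ν/ω(t)`. -/
theorem invGammaPdf_time_derivative_L1_bound
    (ν : ℝ) (hν : 0 < ν) (ω : ℝ → ℝ) (hω : Differentiable ℝ ω)
    (hωpos : ∀ t, 0 < ω t) :
    ∀ t : ℝ,
      IntegrableOn (fun x => deriv (fun s => invGammaPdf ν (ω s) x) t) (Set.Ioi 0) ∧
      ∫ x in Set.Ioi (0:ℝ), |deriv (fun s => invGammaPdf ν (ω s) x) t|
        ≤ |deriv ω t| * (2 * ν / ω t) := by
  intro t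
  have hωt := hωpos t
  have hν₁ : 0 < ν + 1 := by linarith
  have hderiv : ∀ x ∈ Ioi (0 : ℝ), deriv (fun s => invGammaPdf ν (ω s) x) t =
      ν / ω t * (invGammaPdf ν (ω t) x - invGammaPdf (ν + 1) (ω t) x) * deriv ω t :=
    fun x hx => ((hasDerivAt_invGammaPdf_scale hν.ne' hωt.ne' (ne_of_gt hx)).comp t
      (hω t).hasDerivAt).deriv
  have hf := integrableOn_invGammaPdf hν hωt
  have hf₁ := integrableOn_invGammaPdf hν₁ hωt
  have hint : IntegrableOn (fun x => deriv (fun s => invGammaPdf ν (ω s) x) t) (Ioi 0) :=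
    IntegrableOn.congr_fun (((hf.sub hf₁).const_mul _).mul_const _) (fun x hx => (hderiv x hx).symm)
      measurableSet_Ioi
  refine ⟨hint, ?_⟩
  have hpointwise : ∀ x ∈ Ioi (0 : ℝ), |deriv (fun s => invGammaPdf ν (ω s) x) t| ≤
      ν / ω t * (invGammaPdf ν (ω t) x + invGammaPdf (ν + 1) (ω t) x) * |deriv ω t| := by
    intro x hx
    have h₀ := invGammaPdf_nonneg hν hωt hx
    have h₁ := invGammaPdf_nonneg hν₁ hωt hx
    rw [hderiv x hx, abs_mul, abs_mul, abs_of_pos (div_pos hν hωt)]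
    gcongr
    exact abs_sub_le_iff.mpr ⟨by linarith, by linarith⟩
  calc ∫ x in Ioi 0, |deriv (fun s => invGammaPdf ν (ω s) x) t|
      ≤ ∫ x in Ioi 0,
          ν / ω t * (invGammaPdf ν (ω t) x + invGammaPdf (ν + 1) (ω t) x) * |deriv ω t| :=
        setIntegral_mono_on hint.abs (((hf.add hf₁).const_mul _).mul_const _)
          measurableSet_Ioi hpointwise
    _ = |deriv ω t| * (2 * ν / ω t) := by
        rw [integral_mul_const, integral_const_mul, integral_add hf hf₁,
          integral_invGammaPdf hν hωt, integral_invGammaPdf hν₁ hωt]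
        ring
end

section
/- Let θ ∈ (0,1) and let z : [0,∞) → [0,∞) be differentiable and satisfy the differential inequality z'(t) ≤ −a(t) z(t) + b(t) z(t)^θ for all t ≥ 0, where a, b : [0,∞) → [0,∞) are continuous, a(t) → a^∞ as t → ∞ for some a^∞ > 0, and b(t) → 0 as t → ∞. Then z(t) → 0 as t → ∞. -/
/-!
Fix `M > 0`. Once `a ≥ a^∞ / 2` and `b ≤ (a^∞ / 4) M^(1-θ)`, the right-hand side is at most
`-(a^∞ / 4) M` wherever `z ≥ M`, because there `M^(1-θ) z^θ ≤ z`. So `z` decreases at a fixed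
rate while it stays above `M`; being nonnegative it must drop below `M`, and it can never
cross `M` upwards again, since its derivative is negative at every point where `z = M`.
-/

open Filter Set

section Barrier

variable {z : ℝ → ℝ} {m M c : ℝ}

theorem exists_lt_of_deriv_le_neg_of_le {T : ℝ} (hc : 0 < c)
    (hdiff : ∀ t ≥ T, DifferentiableAt ℝ z t) (hbdd : ∀ t ≥ T, m ≤ z t)
    (hderiv : ∀ t ≥ T, M ≤ z t → deriv z t ≤ -c) : ∃ t ≥ T, z t < M := by
  by_contra! hge
  have hdrop : ∀ t ≥ T, z t - z T ≤ -c * (t - T) := fun t ht =>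
    (convex_Ici T).image_sub_le_mul_sub_of_deriv_le
      (fun x hx => (hdiff x hx).continuousAt.continuousWithinAt)
      (fun x hx => (hdiff x (interior_subset hx)).differentiableWithinAt)
      (fun x hx => hderiv x (interior_subset hx) (hge x (interior_subset hx)))
      T self_mem_Ici t ht ht
  set t := T + (z T - m) / c + 1 with ht_def
  have hT : T ≤ t := by
    have : 0 ≤ (z T - m) / c := div_nonneg (sub_nonneg.2 (hbdd T le_rfl)) hc.le
    linarith
  have hslope : -c * (t - T) = -(z T - m) - c := by
    rw [ht_def]
    field_simp
    ring
  linarith [hdrop t hT, hbdd t hT]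

theorem le_of_deriv_neg_of_eq {t₀ : ℝ} (hdiff : ∀ t ≥ t₀, DifferentiableAt ℝ z t)
    (h₀ : z t₀ ≤ M) (hderiv : ∀ t ≥ t₀, z t = M → deriv z t < 0) : ∀ t ≥ t₀, z t ≤ M :=
  fun _ ht => image_le_of_deriv_right_lt_deriv_boundary' (B := fun _ => M) (B' := 0)
    (fun x hx => (hdiff x hx.1).continuousAt.continuousWithinAt)
    (fun x hx => (hdiff x hx.1).hasDerivAt.hasDerivWithinAt) h₀ continuousOn_const
    (fun _ _ => hasDerivWithinAt_const _ _ _) (fun x hx => hderiv x hx.1) ⟨ht, le_rfl⟩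

theorem eventually_le_of_deriv_le_neg_of_le (hc : 0 < c)
    (hdiff : ∀ᶠ t in atTop, DifferentiableAt ℝ z t) (hbdd : ∀ᶠ t in atTop, m ≤ z t)
    (hderiv : ∀ᶠ t in atTop, M ≤ z t → deriv z t ≤ -c) : ∀ᶠ t in atTop, z t ≤ M := by
  obtain ⟨T, hT⟩ := (hdiff.and (hbdd.and hderiv)).exists_forall_of_atTop
  obtain ⟨t₀, ht₀, hzt₀⟩ := exists_lt_of_deriv_le_neg_of_le hc (fun t ht => (hT t ht).1)
    (fun t ht => (hT t ht).2.1) (fun t ht => (hT t ht).2.2)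
  refine eventually_atTop.2 ⟨t₀, le_of_deriv_neg_of_eq (fun t ht => (hT t (ht₀.trans ht)).1)
    hzt₀.le fun t ht hzt => ?_⟩
  exact ((hT t (ht₀.trans ht)).2.2 hzt.ge).trans_lt (neg_neg_of_pos hc)

end Barrier

theorem rpow_one_sub_mul_rpow_le {θ M x : ℝ} (hθ : θ ≤ 1) (hM : 0 < M) (hMx : M ≤ x) :
    M ^ (1 - θ) * x ^ θ ≤ x := by
  have hx : 0 < x := hM.trans_le hMx
  calc M ^ (1 - θ) * x ^ θ ≤ x ^ (1 - θ) * x ^ θ := by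
        gcongr
    _ = x := by rw [← Real.rpow_add hx, sub_add_cancel, Real.rpow_one]

theorem eventually_deriv_le_neg_of_bernoulli_ineq {θ ainf M : ℝ} {z a b : ℝ → ℝ}
    (hθ : θ < 1) (hainf : 0 < ainf) (hM : 0 < M)
    (ha_lim : Tendsto a atTop (nhds ainf)) (hb_lim : Tendsto b atTop (nhds 0))
    (hineq : ∀ᶠ t in atTop, deriv z t ≤ -a t * z t + b t * z t ^ θ) :
    ∀ᶠ t in atTop, M ≤ z t → deriv z t ≤ -(ainf / 4 * M) := by
  have hδ : 0 < ainf / 4 * M ^ (1 - θ) := by positivity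
  filter_upwards [ha_lim.eventually_const_le (half_lt_self hainf),
    hb_lim.eventually_le_const hδ, hineq] with t ha hb hderiv hMz
  have hz : 0 ≤ z t := hM.le.trans hMz
  have hpow : M ^ (1 - θ) * z t ^ θ ≤ z t := rpow_one_sub_mul_rpow_le hθ.le hM hMz
  calc deriv z t ≤ -a t * z t + b t * z t ^ θ := hderiv
    _ ≤ -(ainf / 2) * z t + ainf / 4 * M ^ (1 - θ) * z t ^ θ := by
        gcongr
    _ ≤ -(ainf / 2) * z t + ainf / 4 * z t := by
        rw [mul_assoc]
        gcongr
    _ ≤ -(ainf / 4 * M) := by nlinarith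

theorem bernoulli_type_inequality_tendsto_zero_general
    (θ : ℝ) (hθ1 : θ < 1)
    (z a b : ℝ → ℝ)
    (hz_nonneg : ∀ t ≥ (0:ℝ), 0 ≤ z t)
    (hz_diff : ∀ t ≥ (0:ℝ), DifferentiableAt ℝ z t)
    (ainf : ℝ) (hainf : 0 < ainf)
    (ha_lim : Tendsto a atTop (nhds ainf))
    (hb_lim : Tendsto b atTop (nhds 0))
    (hineq : ∀ t ≥ (0:ℝ), deriv z t ≤ -a t * z t + b t * z t ^ θ) :
    Tendsto z atTop (nhds 0) := by
  have hz_nonneg' : ∀ᶠ t in atTop, 0 ≤ z t := (eventually_ge_atTop 0).mono hz_nonneg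
  refine tendsto_order.2 ⟨fun ε hε => hz_nonneg'.mono fun t ht => hε.trans_le ht,
    fun ε hε => ?_⟩
  have hc : 0 < ainf / 4 * (ε / 2) := by positivity
  have hderiv := eventually_deriv_le_neg_of_bernoulli_ineq hθ1 hainf (half_pos hε) ha_lim hb_lim
    ((eventually_ge_atTop 0).mono hineq)
  filter_upwards [eventually_le_of_deriv_le_neg_of_le hc
    ((eventually_ge_atTop 0).mono hz_diff) hz_nonneg' hderiv] with t ht
  exact ht.trans_lt (half_lt_self hε)

/-- If a nonnegative differentiable function `z` satisfies
`z'(t) ≤ −a(t) z(t) + b(t) z(t)^θ` with `θ ∈ (0,1)`, `a, b` continuous and nonnegative,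
`a(t) → a^∞ > 0` and `b(t) → 0`, then `z(t) → 0` as `t → ∞`. -/
theorem bernoulli_type_inequality_tendsto_zero
    (θ : ℝ) (hθ0 : 0 < θ) (hθ1 : θ < 1)
    (z a b : ℝ → ℝ)
    (hz_nonneg : ∀ t ≥ (0:ℝ), 0 ≤ z t)
    (hz_diff : ∀ t ≥ (0:ℝ), DifferentiableAt ℝ z t)
    (ha_cont : ContinuousOn a (Set.Ici 0))
    (hb_cont : ContinuousOn b (Set.Ici 0))
    (ha_nonneg : ∀ t ≥ (0:ℝ), 0 ≤ a t)
    (hb_nonneg : ∀ t ≥ (0:ℝ), 0 ≤ b t)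
    (ainf : ℝ) (hainf : 0 < ainf)
    (ha_lim : Tendsto a atTop (nhds ainf))
    (hb_lim : Tendsto b atTop (nhds 0))
    (hineq : ∀ t ≥ (0:ℝ), deriv z t ≤ -a t * z t + b t * z t ^ θ) :
    Tendsto z atTop (nhds 0) :=
  bernoulli_type_inequality_tendsto_zero_general θ hθ1 z a b hz_nonneg hz_diff ainf hainf ha_lim
    hb_lim hineq
end
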